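/- Let φ be a finite potent endomorphism of V with index r ≥ 2. Then there exist at least two distinct G-Drazin inverses of φ; in particular the G-Drazin inverse is not unique. -/

import Mathlib

/-!
Along `V = U ⊕ W` the map `φ` is block diagonal, `φ = φ_U ⊕ φ_W` with `φ_U ^ r = 0` and `φ_W`
invertible, so `φ ^ r = 0 ⊕ φ_W ^ r`. Hence `g ⊕ φ_W⁻¹` is a G-Drazin inverse of `φ` for any inner
inverse `g` of `φ_U`. The vector `v = φ ^ (r - 1) u ≠ 0` supplied by minimality of `r` lies in
`ker φ` but not in `W ⊇ range (φ ^ r)`, so a rank-one map `d = ℓ(·) • v` with `ℓ v ≠ 0` and `ℓ = 0`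
on `range (φ ^ r)` is nonzero and satisfies `φ d = 0 = d φ ^ r`; adding it to a G-Drazin inverse
gives another one.
-/

def IsGDrazinInverse {R : Type*} [Semiring R] (r : ℕ) (a b : R) : Prop :=
  a * b * a = a ∧ b * a ^ r = a ^ r * b

namespace IsGDrazinInverse

variable {R S : Type*} [Semiring R] [Semiring S] {r : ℕ} {a b : R}

theorem of_pow_eq_zero (hab : a * b * a = a) (ha : a ^ r = 0) : IsGDrazinInverse r a b :=
  ⟨hab, by rw [ha, mul_zero, zero_mul]⟩

theorem units_inv (u : Rˣ) : IsGDrazinInverse r (u : R) ↑u⁻¹ :=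
  ⟨by simp, ((Commute.refl (u : R)).units_inv_left).pow_right r⟩

theorem prodMk {c d : S} (hab : IsGDrazinInverse r a b) (hcd : IsGDrazinInverse r c d) :
    IsGDrazinInverse r (a, c) (b, d) :=
  ⟨Prod.ext hab.1 hcd.1, Prod.ext hab.2 hcd.2⟩

theorem map {F : Type*} [FunLike F R S] [RingHomClass F R S] (f : F)
    (h : IsGDrazinInverse r a b) : IsGDrazinInverse r (f a) (f b) :=
  ⟨by rw [← map_mul, ← map_mul, h.1], by rw [← map_pow, ← map_mul, ← map_mul, h.2]⟩

theorem add {d : R} (h : IsGDrazinInverse r a b) (hr : r ≠ 0) (had : a * d = 0)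
    (hda : d * a ^ r = 0) : IsGDrazinInverse r a (b + d) := by
  have hrd : a ^ r * d = 0 := by
    rw [← Nat.sub_add_cancel (Nat.one_le_iff_ne_zero.2 hr), pow_succ, mul_assoc, had, mul_zero]
  refine ⟨?_, ?_⟩
  · rw [mul_add, add_mul, had, zero_mul, add_zero, h.1]
  · rw [add_mul, mul_add, h.2, hda, hrd]

end IsGDrazinInverse

section LinearAlgebra

variable {K V V' : Type*} [DivisionRing K] [AddCommGroup V] [Module K V]
  [AddCommGroup V'] [Module K V']

theorem LinearMap.exists_comp_comp_eq_self (f : V →ₗ[K] V') :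
    ∃ g : V' →ₗ[K] V, f ∘ₗ g ∘ₗ f = f := by
  obtain ⟨h, hh⟩ := f.rangeRestrict.exists_rightInverse_of_surjective f.range_rangeRestrict
  obtain ⟨g, hg⟩ := LinearMap.exists_extend h
  refine ⟨g, LinearMap.ext fun x => ?_⟩
  have : g (f x) = h (f.rangeRestrict x) := LinearMap.congr_fun hg (f.rangeRestrict x)
  simpa [this] using congrArg Subtype.val (LinearMap.congr_fun hh (f.rangeRestrict x))

theorem Module.End.exists_ne_zero_mul_eq_zero_and_mul_eq_zero {a b : Module.End K V} {v : V}
    (hv : v ≠ 0) (hav : a v = 0) (hvb : v ∉ LinearMap.range b) :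
    ∃ d : Module.End K V, d ≠ 0 ∧ a * d = 0 ∧ d * b = 0 := by
  obtain ⟨ℓ, hℓv, hbℓ⟩ := Submodule.exists_le_ker_of_notMem hvb
  refine ⟨ℓ.smulRight v, fun h => ?_, ?_, ?_⟩
  · exact hℓv (by simpa [hv] using LinearMap.congr_fun h v)
  · ext x; simp [hav]
  · ext x; simp [LinearMap.mem_ker.1 (hbℓ (LinearMap.mem_range_self b x))]

variable {U W : Submodule K V}

noncomputable def Submodule.blockDiagRingHom (h : IsCompl U W) :
    Module.End K U × Module.End K W →+* Module.End K V :=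
  (Submodule.prodEquivOfIsCompl U W h).conjRingEquiv.toRingHom.comp
    (LinearMap.prodMapRingHom K U W)

theorem Submodule.blockDiagRingHom_restrict (h : IsCompl U W) {φ : Module.End K V}
    (hU : ∀ u ∈ U, φ u ∈ U) (hW : ∀ w ∈ W, φ w ∈ W) :
    Submodule.blockDiagRingHom h (φ.restrict hU, φ.restrict hW) = φ := by
  ext x
  obtain ⟨u, w, rfl, -⟩ := Submodule.existsUnique_add_of_isCompl h x
  simp [Submodule.blockDiagRingHom]

theorem Submodule.range_pow_le_of_isCompl (h : IsCompl U W) {φ : Module.End K V} {r : ℕ}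
    (hW : ∀ w ∈ W, φ w ∈ W) (hnil : ∀ u ∈ U, (φ ^ r) u = 0) :
    LinearMap.range (φ ^ r) ≤ W := by
  rintro _ ⟨x, rfl⟩
  obtain ⟨u, w, rfl, -⟩ := Submodule.existsUnique_add_of_isCompl h x
  rw [map_add, hnil u u.2, zero_add]
  exact Module.End.pow_apply_mem_of_forall_mem r hW w w.2

theorem exists_isGDrazinInverse_of_isCompl (h : IsCompl U W) {φ : Module.End K V} {r : ℕ}
    (hU : ∀ u ∈ U, φ u ∈ U) (hW : ∀ w ∈ W, φ w ∈ W) (hnil : ∀ u ∈ U, (φ ^ r) u = 0)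
    (hbij : Function.Bijective (φ.restrict hW)) : ∃ ψ, IsGDrazinInverse r φ ψ := by
  obtain ⟨g, hg⟩ := (φ.restrict hU).exists_comp_comp_eq_self
  have hnilU : φ.restrict hU ^ r = 0 := by
    ext u
    rw [Module.End.pow_restrict]
    exact hnil u u.2
  obtain ⟨e, he⟩ := (Module.End.isUnit_iff _).2 hbij
  refine ⟨Submodule.blockDiagRingHom h (g, ↑e⁻¹), ?_⟩
  rw [← Submodule.blockDiagRingHom_restrict h hU hW, ← he]
  exact ((IsGDrazinInverse.of_pow_eq_zero hg hnilU).prodMk (.units_inv e)).map _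

end LinearAlgebra

theorem stmt18_general {k V : Type*} [Field k] [AddCommGroup V] [Module k V]
    (φ : Module.End k V) (U W : Submodule k V) (r : ℕ) (hr : 2 ≤ r)
    (hcompl : IsCompl U W)
    (hUinv : ∀ u ∈ U, φ u ∈ U) (hWinv : ∀ w ∈ W, φ w ∈ W)
    (hnil : ∀ u ∈ U, (φ ^ r) u = 0)
    (hmin : ∀ s < r, ∃ u ∈ U, (φ ^ s) u ≠ 0)
    (hWsurj : ∀ w ∈ W, ∃ w' ∈ W, φ w' = w)
    (hWinj : ∀ w ∈ W, φ w = 0 → w = 0) :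
    ∃ ψ₁ ψ₂ : Module.End k V,
      (φ * ψ₁ * φ = φ ∧ ψ₁ * φ ^ r = φ ^ r * ψ₁) ∧
      (φ * ψ₂ * φ = φ ∧ ψ₂ * φ ^ r = φ ^ r * ψ₂) ∧ ψ₁ ≠ ψ₂ := by
  have hbij : Function.Bijective (φ.restrict hWinv) := by
    refine ⟨(injective_iff_map_eq_zero _).2 fun w hw => Subtype.ext ?_, fun w => ?_⟩
    · exact hWinj w w.2 (congrArg Subtype.val hw)
    · obtain ⟨w', hw', hφw'⟩ := hWsurj w w.2
      exact ⟨⟨w', hw'⟩, Subtype.ext hφw'⟩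
  obtain ⟨ψ, hψ⟩ := exists_isGDrazinInverse_of_isCompl hcompl hUinv hWinv hnil hbij
  obtain ⟨u, huU, hv⟩ := hmin (r - 1) (by omega)
  set v := (φ ^ (r - 1)) u
  have hφv : φ v = 0 := by
    rw [← Module.End.mul_apply, ← pow_succ', Nat.sub_add_cancel (by omega), hnil u huU]
  have hvr : v ∉ LinearMap.range (φ ^ r) := fun hmem =>
    hv (hWinj v (Submodule.range_pow_le_of_isCompl hcompl hWinv hnil hmem) hφv)
  obtain ⟨δ, hδ, hφδ, hδφ⟩ :=
    Module.End.exists_ne_zero_mul_eq_zero_and_mul_eq_zero hv hφv hvr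
  exact ⟨ψ, ψ + δ, hψ, hψ.add (by omega) hφδ hδφ, by simpa using hδ⟩

/-- A finite potent endomorphism of index `r ≥ 2` has at least two distinct
G-Drazin inverses. -/
theorem stmt18 {k V : Type*} [Field k] [AddCommGroup V] [Module k V]
    (φ : Module.End k V) (U W : Submodule k V) (r : ℕ) (hr : 2 ≤ r)
    (hcompl : IsCompl U W)
    (hUinv : ∀ u ∈ U, φ u ∈ U) (hWinv : ∀ w ∈ W, φ w ∈ W)
    (hfin : FiniteDimensional k W)
    (hnil : ∀ u ∈ U, (φ ^ r) u = 0)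
    (hmin : ∀ s < r, ∃ u ∈ U, (φ ^ s) u ≠ 0)
    (hWsurj : ∀ w ∈ W, ∃ w' ∈ W, φ w' = w)
    (hWinj : ∀ w ∈ W, φ w = 0 → w = 0) :
    ∃ ψ₁ ψ₂ : Module.End k V,
      (φ * ψ₁ * φ = φ ∧ ψ₁ * φ ^ r = φ ^ r * ψ₁) ∧
      (φ * ψ₂ * φ = φ ∧ ψ₂ * φ ^ r = φ ^ r * ψ₂) ∧ ψ₁ ≠ ψ₂ :=
  stmt18_general φ U W r hr hcompl hUinv hWinv hnil hmin hWsurj hWinj
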